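/- Let $L$ be a $p$-linearized polynomial over $\mathbb{F}_p$ without multiple roots, and suppose $S_k^{2k} = L \circ L'$ for a $p$-linearized polynomial $L'$. Let $d = \gcd(n,k)$, $w = \gcd(l', t_d^k)$, $u = l'/w$, and $U$ the linearized $p$-associate of $u$. Then the set of roots of $L$ in $\mathbb{F}_{p^n}$ equals $U(\mathbb{F}_{p^d})$. -/

import Mathlib

open Polynomial

noncomputable def Tpoly (p l k : ℕ) : Polynomial (ZMod p) :=
  ∑ i ∈ Finset.range (k / l), X ^ p ^ (l * i)

noncomputable def Spoly (p l k : ℕ) : Polynomial (ZMod p) :=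
  ∑ i ∈ Finset.range (k / l), C ((-1 : ZMod p) ^ i) * X ^ p ^ (l * i)

noncomputable def linAssoc (p : ℕ) (l : Polynomial (ZMod p)) : Polynomial (ZMod p) :=
  ∑ i ∈ l.support, C (l.coeff i) * X ^ p ^ i

/-!
Composition of $p$-linearized polynomials corresponds to multiplication of their conventional
associates, so the hypothesis reads $l l' = 1 - X^k$. On $\mathbb{F}_{p^n}$ the Frobenius
$\varphi$ is $\mathbb{F}_p$-linear with $\varphi^n = 1$, and the roots of $L$ are the kernel of
$l(\varphi)$. Dividing $l l' + t (X^d - 1) = 0$ by $w$ gives $X^d - 1 = m u$ and $l = m v$ with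
$u, v$ coprime. A root of $L$ is fixed by $\varphi^k$ and by $\varphi^n$, hence by $\varphi^d$, so
coprimality gives $\ker l(\varphi) = \ker m(\varphi)$. Finally $\dim \ker g(\varphi) = \deg g$ for
every $g \mid X^n - 1$: the associate of $g$ has degree $p^{\deg g}$, which bounds the kernel,
and the kernels of two complementary factors must together fill $\mathbb{F}_{p^n}$. Counting
dimensions, $u(\varphi)$ then maps $\ker(\varphi^d - 1)$ onto $\ker m(\varphi)$.
-/

open Module
open LinearMap (ker)

section LinearizedAssociate

variable {p : ℕ} [Fact p.Prime]

theorem linAssoc_eq_sum (g : (ZMod p)[X]) :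
    linAssoc p g = g.sum fun i c => C c * X ^ p ^ i := rfl

theorem linAssoc_add (a b : (ZMod p)[X]) :
    linAssoc p (a + b) = linAssoc p a + linAssoc p b := by
  simp only [linAssoc_eq_sum]
  exact sum_add_index _ _ _ (by simp) (by simp [add_mul])

theorem linAssoc_monomial (i : ℕ) (c : ZMod p) :
    linAssoc p (monomial i c) = C c * X ^ p ^ i := by
  rw [linAssoc_eq_sum, sum_monomial_index]
  simp

theorem linAssoc_X_pow (m : ℕ) : linAssoc p (X ^ m) = X ^ p ^ m := by
  rw [← monomial_one_right_eq_X_pow, linAssoc_monomial, C_1, one_mul]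

theorem linAssoc_one : linAssoc p 1 = X := by
  simpa using linAssoc_X_pow (p := p) 0

theorem linAssoc_mul (a b : (ZMod p)[X]) :
    linAssoc p (a * b) = (linAssoc p a).comp (linAssoc p b) := by
  induction a using Polynomial.induction_on' with
  | add a₁ a₂ h₁ h₂ => rw [add_mul, linAssoc_add, h₁, h₂, linAssoc_add, add_comp]
  | monomial i c =>
    induction b using Polynomial.induction_on' with
    | add b₁ b₂ h₁ h₂ =>
      rw [mul_add, linAssoc_add, h₁, h₂, linAssoc_add, linAssoc_monomial]
      simp only [mul_comp, C_comp, X_pow_comp, add_pow_char_pow, mul_add]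
    | monomial j e =>
      rw [monomial_mul_monomial, linAssoc_monomial, linAssoc_monomial, linAssoc_monomial,
        mul_comp, C_comp, X_pow_comp, mul_pow, ← C_pow, ZMod.pow_card_pow, ← pow_mul, C_mul,
        ← pow_add, pow_add p j i]
      ring

theorem coeff_linAssoc_pow (g : (ZMod p)[X]) (i : ℕ) :
    (linAssoc p g).coeff (p ^ i) = g.coeff i := by
  induction g using Polynomial.induction_on' with
  | add a b ha hb => rw [linAssoc_add, coeff_add, coeff_add, ha, hb]
  | monomial j c =>
    simp only [linAssoc_monomial, coeff_C_mul_X_pow, coeff_monomial,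
      (Nat.pow_right_injective (Fact.out : p.Prime).two_le).eq_iff, eq_comm]

theorem linAssoc_injective : Function.Injective (linAssoc p) := fun a b h =>
  ext fun i => by rw [← coeff_linAssoc_pow, h, coeff_linAssoc_pow]

theorem linAssoc_ne_zero {g : (ZMod p)[X]} (hg : g ≠ 0) : linAssoc p g ≠ 0 := fun h =>
  hg (linAssoc_injective (h.trans (by simp [linAssoc])))

theorem natDegree_linAssoc_le (g : (ZMod p)[X]) :
    (linAssoc p g).natDegree ≤ p ^ g.natDegree := by
  refine natDegree_sum_le_of_forall_le _ _ fun i hi => (natDegree_C_mul_X_pow_le _ _).trans ?_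
  exact Nat.pow_le_pow_right (Fact.out : p.Prime).pos (le_natDegree_of_mem_supp i hi)

theorem mul_add_X_pow_eq_one_of_linAssoc_comp {l l' : (ZMod p)[X]} {k : ℕ}
    (h : (linAssoc p l).comp (linAssoc p l') = X - X ^ p ^ k) : l * l' + X ^ k = 1 :=
  linAssoc_injective <| by
    rw [linAssoc_add, linAssoc_mul, h, linAssoc_X_pow, linAssoc_one, sub_add_cancel]

end LinearizedAssociate

theorem X_pow_sub_one_ne_zero {R : Type*} [CommRing R] [Nontrivial R] {n : ℕ} (hn : 0 < n) :
    (X ^ n - 1 : R[X]) ≠ 0 := by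
  simpa using X_pow_sub_C_ne_zero hn (1 : R)

theorem pow_gcd_sub_one_mem_span {R : Type*} [CommRing R] (a : R) (m n : ℕ) :
    a ^ m.gcd n - 1 ∈ Ideal.span {a ^ m - 1, a ^ n - 1} := by
  have hone : ∀ i, a ^ i - 1 ∈ Ideal.span {a ^ m - 1, a ^ n - 1} ↔
      Ideal.Quotient.mk (Ideal.span {a ^ m - 1, a ^ n - 1}) a ^ i = 1 := fun i => by
    rw [← Ideal.Quotient.eq_zero_iff_mem, map_sub, map_pow, map_one, sub_eq_zero]
  rw [hone, pow_gcd_eq_one, ← hone, ← hone]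
  exact ⟨Ideal.subset_span (by simp), Ideal.subset_span (by simp)⟩

theorem exists_mul_div_gcd_eq_of_mul_add_mul_eq_zero {K : Type*} [Field K] [DecidableEq K]
    {l l' t e : K[X]} (h : l * l' + t * e = 0) (ht : t ≠ 0) (he : e ≠ 0) :
    ∃ m v, m * (l' / gcd l' t) = e ∧ l = m * v ∧ IsCoprime (l' / gcd l' t) v := by
  set u := l' / gcd l' t
  set v := t / gcd l' t
  have hw : gcd l' t ≠ 0 := gcd_ne_zero_of_right ht
  have hl' : l' = gcd l' t * u := (EuclideanDomain.mul_div_cancel' hw (gcd_dvd_left _ _)).symm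
  have ht' : t = gcd l' t * v := (EuclideanDomain.mul_div_cancel' hw (gcd_dvd_right _ _)).symm
  have huv : IsCoprime u v := isCoprime_div_gcd_div_gcd ht
  have hlu : l * u = -(v * e) :=
    mul_left_cancel₀ hw (by linear_combination h - l * hl' - e * ht')
  obtain ⟨m, hm⟩ : u ∣ e := huv.dvd_of_dvd_mul_left ⟨-l, by linear_combination hlu⟩
  have hu : u ≠ 0 := left_ne_zero_of_mul (hm ▸ he)
  exact ⟨m, -v, by rw [hm, mul_comm],
    mul_right_cancel₀ hu (by linear_combination hlu - v * hm), huv.neg_right⟩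

section EndomorphismKernels

variable {R M : Type*} [CommRing R] [AddCommGroup M] [Module R M] (f : Module.End R M)

theorem ker_aeval_le_of_dvd {a b : R[X]} (h : a ∣ b) : ker (aeval f a) ≤ ker (aeval f b) := by
  obtain ⟨c, rfl⟩ := h
  rw [mul_comm, map_mul, Module.End.mul_eq_comp]
  exact LinearMap.ker_le_ker_comp _ _

theorem ker_aeval_inf_le_of_mem_span {a b c : R[X]} (hc : c ∈ Ideal.span {a, b}) :
    ker (aeval f a) ⊓ ker (aeval f b) ≤ ker (aeval f c) := by
  obtain ⟨s, t, rfl⟩ := Ideal.mem_span_pair.1 hc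
  intro x hx
  obtain ⟨ha, hb⟩ := Submodule.mem_inf.1 hx
  rw [LinearMap.mem_ker] at ha hb ⊢
  simp [Module.End.mul_apply, ha, hb]

theorem ker_aeval_mul_inf_le_of_isCoprime {m u v : R[X]} (huv : IsCoprime u v) :
    ker (aeval f (m * u)) ⊓ ker (aeval f (m * v)) ≤ ker (aeval f m) := by
  intro x hx
  obtain ⟨hu, hv⟩ := Submodule.mem_inf.1 hx
  rw [LinearMap.mem_ker, mul_comm, map_mul, Module.End.mul_apply] at hu hv
  exact Submodule.disjoint_def.1 (disjoint_ker_aeval_of_isCoprime f huv) _ hu hv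

end EndomorphismKernels

theorem finrank_map_add_finrank_ker_inf {K V W : Type*} [DivisionRing K] [AddCommGroup V]
    [Module K V] [AddCommGroup W] [Module K W] [FiniteDimensional K V] (f : V →ₗ[K] W)
    (U : Submodule K V) :
    finrank K (U.map f) + finrank K ↥(ker f ⊓ U) = finrank K U := by
  rw [← LinearMap.range_domRestrict, ← (f.domRestrict U).finrank_range_add_finrank_ker,
    LinearMap.ker_domRestrict, ← (Submodule.comapSubtypeEquivOfLe inf_le_right).finrank_eq,
    Submodule.comap_inf, Submodule.comap_subtype_self, inf_top_eq]

theorem finrank_ker_mul_le {K V : Type*} [DivisionRing K] [AddCommGroup V] [Module K V]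
    [FiniteDimensional K V] (f g : Module.End K V) :
    finrank K (ker (f * g)) ≤ finrank K (ker f) + finrank K (ker g) := by
  have hmap : (ker (f * g)).map g ≤ ker f := Submodule.map_le_iff_le_comap.2 fun x hx => hx
  have hker : ker g ⊓ ker (f * g) = ker g := inf_eq_left.2 (LinearMap.ker_le_ker_comp g f)
  have := finrank_map_add_finrank_ker_inf g (ker (f * g))
  rw [hker] at this
  have := Submodule.finrank_mono hmap
  omega

section Frobenius

variable (p : ℕ) [Fact p.Prime]

noncomputable def frobeniusEnd (R : Type*) [CommRing R] [Algebra (ZMod p) R] :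
    Module.End (ZMod p) R :=
  (FiniteField.frobeniusAlgHom (ZMod p) R).toLinearMap

variable {p} {R : Type*} [CommRing R] [Algebra (ZMod p) R]

theorem frobeniusEnd_pow_apply (i : ℕ) (x : R) : (frobeniusEnd p R ^ i) x = x ^ p ^ i := by
  rw [Module.End.pow_apply]
  simp [frobeniusEnd, FiniteField.coe_frobeniusAlgHom, ZMod.card]

theorem aeval_linAssoc (g : (ZMod p)[X]) (x : R) :
    aeval x (linAssoc p g) = aeval (frobeniusEnd p R) g x := by
  induction g using Polynomial.induction_on' with
  | add a b ha hb => rw [linAssoc_add, map_add, map_add, LinearMap.add_apply, ha, hb]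
  | monomial i c =>
    simp [linAssoc_monomial, aeval_monomial, frobeniusEnd_pow_apply, Algebra.smul_def]

theorem coe_ker_aeval_frobeniusEnd (g : (ZMod p)[X]) :
    (ker (aeval (frobeniusEnd p R) g) : Set R) = {x | aeval x (linAssoc p g) = 0} := by
  ext x
  rw [SetLike.mem_coe, LinearMap.mem_ker, ← aeval_linAssoc]
  rfl

theorem coe_ker_aeval_frobeniusEnd_X_pow_sub_one (d : ℕ) :
    (ker (aeval (frobeniusEnd p R) (X ^ d - 1 : (ZMod p)[X])) : Set R) = {x | x ^ p ^ d = x} := by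
  ext x
  rw [SetLike.mem_coe, LinearMap.mem_ker, map_sub, map_pow, aeval_X, map_one,
    LinearMap.sub_apply, frobeniusEnd_pow_apply, Module.End.one_apply, sub_eq_zero]
  rfl

variable {F : Type*} [Field F] [Fintype F] [Algebra (ZMod p) F]

local notation "φ" => frobeniusEnd p F

theorem ker_aeval_frobeniusEnd_X_pow_finrank_sub_one :
    ker (aeval φ (X ^ finrank (ZMod p) F - 1 : (ZMod p)[X])) = ⊤ := by
  refine eq_top_iff.2 fun x _ => ?_
  have hcard : Fintype.card F = p ^ finrank (ZMod p) F := by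
    rw [Module.card_eq_pow_finrank (K := ZMod p), ZMod.card]
  rw [LinearMap.mem_ker, map_sub, map_pow, aeval_X, map_one, LinearMap.sub_apply,
    frobeniusEnd_pow_apply, ← hcard, FiniteField.pow_card, Module.End.one_apply, sub_self]

theorem ker_aeval_frobeniusEnd_le_of_dvd_X_pow_sub_one {g : (ZMod p)[X]} {k : ℕ}
    (hg : g ∣ X ^ k - 1) :
    ker (aeval φ g) ≤ ker (aeval φ (X ^ (finrank (ZMod p) F).gcd k - 1 : (ZMod p)[X])) :=
  calc ker (aeval φ g)
      ≤ ker (aeval φ (X ^ finrank (ZMod p) F - 1 : (ZMod p)[X])) ⊓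
          ker (aeval φ (X ^ k - 1 : (ZMod p)[X])) := by
        rw [ker_aeval_frobeniusEnd_X_pow_finrank_sub_one, top_inf_eq]
        exact ker_aeval_le_of_dvd _ hg
    _ ≤ _ := ker_aeval_inf_le_of_mem_span _ (pow_gcd_sub_one_mem_span X _ k)

theorem finrank_ker_aeval_frobeniusEnd_le {g : (ZMod p)[X]} (hg : g ≠ 0) :
    finrank (ZMod p) (ker (aeval φ g)) ≤ g.natDegree := by
  have hroots : (ker (aeval φ g) : Set F) ⊆ (linAssoc p g).rootSet F := fun x hx => by
    rw [mem_rootSet, aeval_linAssoc]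
    exact ⟨linAssoc_ne_zero hg, hx⟩
  rw [← Nat.pow_le_pow_iff_right (Fact.out : p.Prime).one_lt]
  calc p ^ finrank (ZMod p) (ker (aeval φ g))
      = Nat.card (ker (aeval φ g)) := by
        rw [Module.natCard_eq_pow_finrank (K := ZMod p), Nat.card_zmod]
    _ ≤ ((linAssoc p g).rootSet F).ncard := by
        rw [← Nat.card_coe_set_eq]
        exact Set.ncard_le_ncard hroots (Set.toFinite _)
    _ ≤ (linAssoc p g).natDegree := ncard_rootSet_le _ _
    _ ≤ p ^ g.natDegree := natDegree_linAssoc_le g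

theorem finrank_ker_aeval_frobeniusEnd {g : (ZMod p)[X]}
    (hg : g ∣ X ^ finrank (ZMod p) F - 1) :
    finrank (ZMod p) (ker (aeval φ g)) = g.natDegree := by
  obtain ⟨h, hgh⟩ := hg
  obtain ⟨hg0, hh0⟩ := mul_ne_zero_iff.1 (hgh ▸ X_pow_sub_one_ne_zero finrank_pos)
  have hdeg : g.natDegree + h.natDegree = finrank (ZMod p) F := by
    rw [← natDegree_mul hg0 hh0, ← hgh, ← C_1, natDegree_X_pow_sub_C]
  have hsum : finrank (ZMod p) F ≤
      finrank (ZMod p) (ker (aeval φ g)) + finrank (ZMod p) (ker (aeval φ h)) := by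
    rw [← finrank_top (ZMod p) F, ← ker_aeval_frobeniusEnd_X_pow_finrank_sub_one (p := p), hgh,
      map_mul]
    exact finrank_ker_mul_le _ _
  have := finrank_ker_aeval_frobeniusEnd_le (F := F) hg0
  have := finrank_ker_aeval_frobeniusEnd_le (F := F) hh0
  omega

theorem map_aeval_frobeniusEnd_ker_mul {m u : (ZMod p)[X]}
    (h : m * u ∣ X ^ finrank (ZMod p) F - 1) :
    (ker (aeval φ (m * u))).map (aeval φ u) = ker (aeval φ m) := by
  have hle : (ker (aeval φ (m * u))).map (aeval φ u) ≤ ker (aeval φ m) :=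
    Submodule.map_le_iff_le_comap.2 fun x hx => by
      rwa [Submodule.mem_comap, LinearMap.mem_ker, ← Module.End.mul_apply, ← map_mul]
  refine Submodule.eq_of_le_of_finrank_eq hle ?_
  obtain ⟨hm0, hu0⟩ :=
    mul_ne_zero_iff.1 (ne_zero_of_dvd_ne_zero (X_pow_sub_one_ne_zero finrank_pos) h)
  have := finrank_map_add_finrank_ker_inf (aeval φ u) (ker (aeval φ (m * u)))
  rw [inf_eq_left.2 (ker_aeval_le_of_dvd _ (dvd_mul_left u m)), finrank_ker_aeval_frobeniusEnd h,
    finrank_ker_aeval_frobeniusEnd ((dvd_mul_left u m).trans h), natDegree_mul hm0 hu0] at this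
  rw [finrank_ker_aeval_frobeniusEnd ((dvd_mul_right m u).trans h)]
  omega

end Frobenius

theorem stmt9_general (p : ℕ) [Fact p.Prime] (n k : ℕ) (hn : 0 < n) (hk : 0 < k)
    (l l' : Polynomial (ZMod p))
    (h : (linAssoc p l).comp (linAssoc p l') = X - X ^ p ^ k)
    (d : ℕ) (hd : d = Nat.gcd n k)
    (t w u : Polynomial (ZMod p))
    (ht : t = ∑ i ∈ Finset.range (k / d), X ^ (d * i))
    (hw : w = gcd l' t) (hu : u = l' / w) :
    {x : GaloisField p n | aeval x (linAssoc p l) = 0} =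
      (fun x => aeval x (linAssoc p u)) '' {x : GaloisField p n | x ^ p ^ d = x} := by
  subst hw hu
  have := Fintype.ofFinite (GaloisField p n)
  set φ := frobeniusEnd p (GaloisField p n)
  have hfin : finrank (ZMod p) (GaloisField p n) = n := GaloisField.finrank p hn.ne'
  have hll' : l * l' + X ^ k = 1 := mul_add_X_pow_eq_one_of_linAssoc_comp h
  have htX : t * (X ^ d - 1) = X ^ k - 1 := by
    simp_rw [ht, pow_mul]
    rw [geom_sum_mul, ← pow_mul, Nat.mul_div_cancel' (hd ▸ Nat.gcd_dvd_right n k)]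
  have hsum : l * l' + t * (X ^ d - 1) = 0 := by linear_combination hll' + htX
  obtain ⟨m, v, hmu, hl, huv⟩ := exists_mul_div_gcd_eq_of_mul_add_mul_eq_zero hsum
    (left_ne_zero_of_mul (htX ▸ X_pow_sub_one_ne_zero hk))
    (X_pow_sub_one_ne_zero (hd ▸ Nat.gcd_pos_of_pos_left k hn))
  have hroots : ker (aeval φ l) ≤ ker (aeval φ (m * (l' / gcd l' t))) := by
    have := ker_aeval_frobeniusEnd_le_of_dvd_X_pow_sub_one (F := GaloisField p n) (g := l)
      ⟨-l', by linear_combination hll'⟩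
    rwa [hfin, ← hd, ← hmu] at this
  have hker : ker (aeval φ l) = ker (aeval φ m) :=
    le_antisymm ((le_inf hroots (hl ▸ le_rfl)).trans (ker_aeval_mul_inf_le_of_isCoprime φ huv))
      (ker_aeval_le_of_dvd φ ⟨v, hl⟩)
  have himg : (ker (aeval φ (X ^ d - 1 : (ZMod p)[X]))).map (aeval φ (l' / gcd l' t)) =
      ker (aeval φ m) := by
    rw [← hmu, map_aeval_frobeniusEnd_ker_mul]
    rw [hmu, hfin]
    exact dvd_pow_sub_one_of_dvd (hd ▸ Nat.gcd_dvd_left n k)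
  rw [← coe_ker_aeval_frobeniusEnd, hker, ← himg, Submodule.map_coe,
    coe_ker_aeval_frobeniusEnd_X_pow_sub_one]
  simp only [aeval_linAssoc, φ]

theorem stmt9 (p : ℕ) [Fact p.Prime] (n k : ℕ) (hn : 0 < n) (hk : 0 < k)
    (l l' : Polynomial (ZMod p)) (hsqf : Squarefree (linAssoc p l))
    (h : (linAssoc p l).comp (linAssoc p l') = X - X ^ p ^ k)
    (d : ℕ) (hd : d = Nat.gcd n k)
    (t w u : Polynomial (ZMod p))
    (ht : t = ∑ i ∈ Finset.range (k / d), X ^ (d * i))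
    (hw : w = gcd l' t) (hu : u = l' / w) :
    {x : GaloisField p n | aeval x (linAssoc p l) = 0} =
      (fun x => aeval x (linAssoc p u)) '' {x : GaloisField p n | x ^ p ^ d = x} :=
  stmt9_general p n k hn hk l l' h d hd t w u ht hw hu
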